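/- For all integers n ≥ 2 and k (with the convention ψ_{m,j} = 0 for j < 0), the numbers ψ_{n,k} satisfy the recurrence ψ_{n,k} = (2n − 2k + 1)·ψ_{n−1,k−1} + (2k + 1)·ψ_{n−1,k}, with initial conditions ψ_{1,0} = 1 and ψ_{1,k} = 0 for k ≠ 0. -/

import Mathlib

open scoped Classical

/-- A signed permutation of length `n`: a permutation `w` of `ℤ` with
`w(-i) = -w(i)` that fixes every integer of absolute value greater than `n`. -/
def IsSignedPerm (n : ℕ) (w : Equiv.Perm ℤ) : Prop :=
  (∀ i : ℤ, w (-i) = - w i) ∧ ∀ i : ℤ, (n : ℤ) < |i| → w i = i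

/-- Membership in `X_n := {w ∈ 𝔅_n : w⁻¹(1) > 0}`. -/
def InXn (n : ℕ) (w : Equiv.Perm ℤ) : Prop :=
  IsSignedPerm n w ∧ 0 < w.symm 1

/-- The type B descent number `des_B(w) = #{i ∈ {0,…,n-1} : w_i > w_{i+1}}`,
with the convention `w_0 = 0` (automatic, since a signed permutation fixes `0`). -/
noncomputable def desB (n : ℕ) (w : Equiv.Perm ℤ) : ℕ :=
  ((Finset.range n).filter fun i => w ((i : ℤ) + 1) < w (i : ℤ)).card

/-- The flag-excedance `fexc(w) = 2·#{i : w_i > i} + #{i : w_i < 0}`. -/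
noncomputable def fexc (n : ℕ) (w : Equiv.Perm ℤ) : ℕ :=
  2 * ((Finset.Icc (1 : ℤ) (n : ℤ)).filter fun i => i < w i).card
    + ((Finset.Icc (1 : ℤ) (n : ℤ)).filter fun i => w i < 0).card

/-- The cyclic successor on `{-n,…,-1,1,…,n}` (with `(-1)⁺ = 1` and `n⁺ = -n`). -/
def csucc (n : ℕ) (i : ℤ) : ℤ :=
  if i = -1 then 1 else if i = (n : ℤ) then -(n : ℤ) else i + 1

/-- The circular descent set `CDes(w) = {i ∈ {-n,…,-1,1,…,n} : w(i) > w(i⁺)}`. -/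
noncomputable def cdesSet (n : ℕ) (w : Equiv.Perm ℤ) : Finset ℤ :=
  (Finset.Icc (-(n : ℤ)) (n : ℤ)).filter fun i => i ≠ 0 ∧ w (csucc n i) < w i

/-- The circular descent number `cdes(w) = |CDes(w)|`. -/
noncomputable def cdes (n : ℕ) (w : Equiv.Perm ℤ) : ℕ := (cdesSet n w).card

/-- `a ≪ b`: there is a nonzero integer strictly between `a` and `b`. -/
def Lll (a b : ℤ) : Prop := ∃ c : ℤ, c ≠ 0 ∧ a < c ∧ c < b

/-- The big ascent number `basc(w) = |BAsc(w)|`, where `BAsc(w) ⊆ {-1,1,…,n}`: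
`-1 ∈ BAsc(w)` iff `w_1 ≥ 2`; for `1 ≤ i ≤ n-1`, `i ∈ BAsc(w)` iff `w_i ≪ w_{i+1}`;
and `n ∈ BAsc(w)` iff `w_n ≤ -2`. -/
noncomputable def basc (n : ℕ) (w : Equiv.Perm ℤ) : ℕ :=
  ((insert (-1 : ℤ) (Finset.Icc (1 : ℤ) (n : ℤ))).filter fun i =>
    if i = -1 then 2 ≤ w 1
    else if i = (n : ℤ) then w (n : ℤ) ≤ -2
    else Lll (w i) (w (i + 1))).card

/-- `L'_{n,k}(r)`: the number of half-integer points in the `r`-th dilate of the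
half-open type C hypersimplex `Δ'_{C_n,k}`, in the `y`-coordinates. -/
noncomputable def Lp (n k r : ℕ) : ℕ :=
  if k = 1 then
    Set.ncard {y : Fin n → ℤ |
      (∀ j, 0 ≤ y j ∧ y j ≤ 2 * (r : ℤ)) ∧ (∀ j : Fin n, (j : ℕ) = 0 → y j ≤ (r : ℤ)) ∧
      0 ≤ ∑ j, y j ∧ ∑ j, y j ≤ (r : ℤ)}
  else
    Set.ncard {y : Fin n → ℤ |
      (∀ j, 0 ≤ y j ∧ y j ≤ 2 * (r : ℤ)) ∧ (∀ j : Fin n, (j : ℕ) = 0 → y j ≤ (r : ℤ)) ∧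
      ((k : ℤ) - 1) * r < ∑ j, y j ∧ ∑ j, y j ≤ (k : ℤ) * r}

/-- `L_{n,k}(r)`: the number of half-integer points in the `r`-th dilate of the
closed type C hypersimplex `Δ_{C_n,k}`, in the `y`-coordinates. -/
noncomputable def Lc (n k r : ℕ) : ℕ :=
  Set.ncard {y : Fin n → ℤ |
    (∀ j, 0 ≤ y j ∧ y j ≤ 2 * (r : ℤ)) ∧ (∀ j : Fin n, (j : ℕ) = 0 → y j ≤ (r : ℤ)) ∧
    ((k : ℤ) - 1) * r ≤ ∑ j, y j ∧ ∑ j, y j ≤ (k : ℤ) * r}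

/-- `ψ_{n,k} = #{w ∈ X_n : basc(w) = k}`. -/
noncomputable def psiN (n k : ℕ) : ℕ :=
  {w : Equiv.Perm ℤ | InXn n w ∧ basc n w = k}.ncard

/-- `ψ_{n,k}` with an integer index (`0` for negative `k`). -/
noncomputable def psiZ (n : ℕ) (k : ℤ) : ℕ :=
  {w : Equiv.Perm ℤ | InXn n w ∧ (basc n w : ℤ) = k}.ncard

/-- `Ψ_{C_n}(t) = Σ_k ψ_{n,k} t^k ∈ ℤ[t]`. -/
noncomputable def PsiC (n : ℕ) : Polynomial ℤ :=
  ∑ᶠ k : ℕ, (psiN n k : Polynomial ℤ) * Polynomial.X ^ k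

/-- `Ψ_{C_n}(t)` with rational coefficients. -/
noncomputable def PsiCQ (n : ℕ) : Polynomial ℚ :=
  ∑ᶠ k : ℕ, (psiN n k : Polynomial ℚ) * Polynomial.X ^ k

/-- The descent number of a permutation of `{1,…,m}`. -/
noncomputable def desA (m : ℕ) (σ : Equiv.Perm (Fin m)) : ℕ :=
  (Finset.univ.filter fun i : Fin m =>
    ∃ h : (i : ℕ) + 1 < m, σ ⟨(i : ℕ) + 1, h⟩ < σ i).card

/-- The classical (type A) Eulerian polynomial `E_m^A(t) = Σ_{σ ∈ S_m} t^{des σ}`. -/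
noncomputable def EulerianA (m : ℕ) : Polynomial ℚ :=
  ∑ σ : Equiv.Perm (Fin m), Polynomial.X ^ desA m σ

/-- The relation `u ⇀ w` on `X_n`. -/
def covRel (n : ℕ) (u w : Equiv.Perm ℤ) : Prop :=
  InXn n u ∧ InXn n w ∧
    ((2 ≤ w 1 ∧ u = w * Equiv.swap (1 : ℤ) (-1)) ∨
     (∃ i : ℤ, 1 ≤ i ∧ i ≤ (n : ℤ) - 1 ∧ Lll (w i) (w (i + 1)) ∧
        u = w * (Equiv.swap i (i + 1) * Equiv.swap (-i) (-(i + 1)))) ∨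
     (w (n : ℤ) ≤ -2 ∧ u = w * Equiv.swap (n : ℤ) (-(n : ℤ))))

/-- The `i`-th coordinate (`1 ≤ i ≤ n`) of the vertex `v^j(w)` (`1 ≤ j ≤ n+1`):
`v^{n+1}_i(w) = #({1,…,i-1} ∩ CDes(w⁻¹))` and `v^j = v^{j+1} + ½ e_{w_j}`. -/
noncomputable def vcoord (n : ℕ) (w : Equiv.Perm ℤ) (j : ℕ) (i : ℕ) : ℚ :=
  ((Finset.Icc (1 : ℤ) ((i : ℤ) - 1) ∩ cdesSet n w.symm).card : ℚ)
    + (1 / 2) * ∑ m ∈ Finset.Icc (j : ℤ) (n : ℤ),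
        (if w m = (i : ℤ) then (1 : ℚ) else if w m = -(i : ℤ) then -1 else 0)

/-- `u` is the image `τ_n(w)`: in window notation `u = 1 w'_1 ⋯ w'_n`, where
`w'_i = w_i + 1` if `w_i > 0` and `w'_i = w_i - 1` if `w_i < 0`. -/
def isTau (n : ℕ) (w u : Equiv.Perm ℤ) : Prop :=
  u 1 = 1 ∧ ∀ i : ℤ, 1 ≤ i → i ≤ (n : ℤ) →
    u (i + 1) = if 0 < w i then w i + 1 else w i - 1

/-!
Encode `w ∈ X_n` by its window `w₁ ⋯ wₙ`, a list containing each of `1, …, n` once up to sign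
and containing `1`, padded to `0 w₁ ⋯ wₙ 0`; then `basc w` is the number of big ascents between
consecutive entries of the padded list. Deleting `±n` maps `X_n` onto `X_{n-1}`, and each
`u ∈ X_{n-1}` has `2n` preimages, one per gap `(a, b)` of its padded window and sign of the
inserted entry. Inserting `n` creates the big ascent `a ≪ n` unless `a = n - 1` and destroys
`a ≪ b`; inserting `-n` creates `-n ≪ b` unless `b = -(n - 1)` and destroys `a ≪ b`. So `basc`
rises by at most one, and it stays equal to `basc u = k` exactly at the `2k` slots on a big ascent
and at the one slot beside `±(n - 1)`: `2k + 1` preimages keep `k` and `2n - 2k - 1` reach `k + 1`.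
-/

open Finset

theorem List.insertIdx_append_of_le_length {α : Type*} (s : α) :
    ∀ (p : ℕ) (l₁ l₂ : List α), p ≤ l₁.length →
      (l₁ ++ l₂).insertIdx p s = l₁.insertIdx p s ++ l₂
  | 0, _, _, _ => rfl
  | p + 1, a :: l₁, l₂, h => by
    simp [List.insertIdx_append_of_le_length s p l₁ l₂ (by simpa using h)]

theorem List.sum_range_length_getD_eq_count {α : Type*} [DecidableEq α] (l : List α) (d x : α) :
    ∑ p ∈ Finset.range l.length, (if l.getD p d = x then 1 else 0) = l.count x := by
  induction l with
  | nil => rfl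
  | cons y l ih =>
    rw [List.length_cons, Finset.sum_range_succ', List.count_cons]
    simp only [List.getD_cons_succ, List.getD_cons_zero, ih, beq_iff_eq]

theorem lll_iff {a b : ℤ} : Lll a b ↔ a + 2 ≤ b ∧ ¬(a = -1 ∧ b = 1) := by
  constructor
  · rintro ⟨c, hc, hac, hcb⟩
    omega
  · rintro ⟨hab, hne⟩
    by_cases ha : a = -1
    · exact ⟨1, one_ne_zero, by omega, by omega⟩
    · exact ⟨a + 1, by omega, by omega, by omega⟩

noncomputable def bigAscents : List ℤ → ℕ
  | a :: b :: l => (if Lll a b then 1 else 0) + bigAscents (b :: l)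
  | _ => 0

theorem bigAscents_eq_sum (l : List ℤ) :
    bigAscents l = ∑ q ∈ range (l.length - 1),
      if Lll (l.getD q 0) (l.getD (q + 1) 0) then 1 else 0 := by
  match l with
  | [] | [_] => rfl
  | a :: b :: l =>
    rw [bigAscents, bigAscents_eq_sum (b :: l)]
    simp [sum_range_succ' _ l.length, add_comm]

theorem bigAscents_insertIdx (s : ℤ) : ∀ (q : ℕ) (l : List ℤ), q + 1 < l.length →
    bigAscents (l.insertIdx (q + 1) s) + (if Lll (l.getD q 0) (l.getD (q + 1) 0) then 1 else 0)
      = bigAscents l + (if Lll (l.getD q 0) s then 1 else 0)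
        + (if Lll s (l.getD (q + 1) 0) then 1 else 0)
  | 0, a :: b :: l, _ => by
    simp only [List.insertIdx_succ_cons, List.insertIdx_zero, bigAscents, List.getD_cons_zero,
      List.getD_cons_succ]
    omega
  | q + 1, a :: b :: l, h => by
    have ih := bigAscents_insertIdx s q (b :: l) (by simpa using h)
    simp only [List.insertIdx_succ_cons, List.getD_cons_succ, bigAscents] at ih ⊢
    omega

def IsWindow (m : ℕ) (l : List ℤ) : Prop :=
  (l.map Int.natAbs).Perm (List.range' 1 m)

namespace IsWindow

variable {m : ℕ} {l : List ℤ}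

theorem length_eq (h : IsWindow m l) : l.length = m := by
  simpa using List.Perm.length_eq h

theorem nodup (h : IsWindow m l) : (l.map Int.natAbs).Nodup :=
  h.nodup_iff.mpr List.nodup_range'

theorem natAbs_mem_Icc (h : IsWindow m l) {x : ℤ} (hx : x ∈ l) :
    1 ≤ x.natAbs ∧ x.natAbs ≤ m := by
  have := h.subset (List.mem_map_of_mem hx)
  rw [List.mem_range'_1] at this
  omega

theorem count_add_count_neg (h : IsWindow m l) (hm : 1 ≤ m) :
    l.count (m : ℤ) + l.count (-(m : ℤ)) = 1 := by
  have hcount : ∀ t : List ℤ,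
      t.count (m : ℤ) + t.count (-(m : ℤ)) = (t.map Int.natAbs).count m := by
    intro t
    induction t with
    | nil => rfl
    | cons x t ih =>
      simp only [List.count_cons, List.map_cons, ← ih, beq_iff_eq]
      split_ifs <;> omega
  rw [hcount, h.count_eq, List.count_range']
  simp only [if_pos (⟨m - 1, by omega, by omega⟩ : ∃ i, i < m ∧ m = 1 + 1 * i)]

theorem eq_of_natAbs_getD_eq (h : IsWindow m l) {p q : ℕ} (hp : p < m) (hq : q < m)
    (hpq : (l.getD p 0).natAbs = (l.getD q 0).natAbs) : p = q := by
  have hl := h.length_eq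
  rw [List.getD_eq_getElem _ _ (by omega), List.getD_eq_getElem _ _ (by omega)] at hpq
  exact (h.nodup.getElem_inj_iff (i := p) (j := q) (hi := by simp; omega)
    (hj := by simp; omega)).mp (by simpa using hpq)

end IsWindow

theorem isWindow_insertIdx_iff {m p : ℕ} {g : List ℤ} {s : ℤ} (hp : p ≤ g.length)
    (hs : s.natAbs = m + 1) : IsWindow (m + 1) (g.insertIdx p s) ↔ IsWindow m g := by
  have hrange : List.range' 1 (m + 1) = (List.range' 1 m).insertIdx m (m + 1) := by
    rw [List.range'_concat, ← List.insertIdx_length_self, List.length_range', add_comm, one_mul]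
  rw [IsWindow, IsWindow, List.map_insertIdx, hs, hrange]
  exact List.perm_insertIdx_iff_of_le (by simpa using hp) (by simp) _

theorem IsWindow.exists_eq_insertIdx {m : ℕ} {l : List ℤ} (h : IsWindow (m + 1) l) :
    ∃ g p s, IsWindow m g ∧ p ≤ m ∧ s.natAbs = m + 1 ∧ g.insertIdx p s = l := by
  obtain ⟨x, hx, hxm⟩ := List.mem_map.mp (h.symm.subset (by simp : m + 1 ∈ List.range' 1 (m + 1)))
  obtain ⟨p, hp, rfl⟩ := List.getElem_of_mem hx
  have hlen := h.length_eq
  have hins := List.insertIdx_eraseIdx_getElem hp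
  refine ⟨l.eraseIdx p, p, l[p], ?_, by omega, hxm, hins⟩
  have hp' : p ≤ (l.eraseIdx p).length := by rw [List.length_eraseIdx_of_lt hp]; omega
  rw [← isWindow_insertIdx_iff hp' hxm, hins]
  exact h

def insertionSlots (m : ℕ) : Finset (ℕ × ℤ) :=
  range (m + 1) ×ˢ {(m : ℤ) + 1, -((m : ℤ) + 1)}

theorem mem_insertionSlots {m : ℕ} {x : ℕ × ℤ} :
    x ∈ insertionSlots m ↔ x.1 ≤ m ∧ x.2.natAbs = m + 1 := by
  simp only [insertionSlots, mem_product, mem_range, mem_insert, mem_singleton]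
  omega

theorem card_insertionSlots (m : ℕ) : #(insertionSlots m) = 2 * (m + 1) := by
  rw [insertionSlots, card_product, card_range, card_pair (by omega)]
  ring

def windowFinset : ℕ → Finset (List ℤ)
  | 0 => {[]}
  | m + 1 => (windowFinset m ×ˢ insertionSlots m).image fun x => x.1.insertIdx x.2.1 x.2.2

theorem mem_windowFinset {m : ℕ} {l : List ℤ} : l ∈ windowFinset m ↔ IsWindow m l := by
  induction m generalizing l with
  | zero => simp [windowFinset, IsWindow]
  | succ m ih =>
    simp only [windowFinset, mem_image, mem_product, ih, mem_insertionSlots, Prod.exists]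
    constructor
    · rintro ⟨g, p, s, ⟨hg, hp, hs⟩, rfl⟩
      exact (isWindow_insertIdx_iff (hg.length_eq ▸ hp) hs).mpr hg
    · intro h
      obtain ⟨g, p, s, hg, hp, hs, rfl⟩ := h.exists_eq_insertIdx
      exact ⟨g, p, s, ⟨hg, hp, hs⟩, rfl⟩

theorem windowFinset_one : windowFinset 1 = {[1], [-1]} := by
  decide

theorem insertIdx_injOn_windowFinset (m : ℕ) :
    Set.InjOn (fun x : List ℤ × ℕ × ℤ => x.1.insertIdx x.2.1 x.2.2)
      ↑(windowFinset m ×ˢ insertionSlots m) := by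
  rintro ⟨g, p, s⟩ hx ⟨g', p', s'⟩ hx' (heq : g.insertIdx p s = g'.insertIdx p' s')
  simp only [coe_product, Set.mem_prod, mem_coe, mem_windowFinset, mem_insertionSlots] at hx hx'
  obtain ⟨hg, hp, hs⟩ := hx
  obtain ⟨hg', hp', hs'⟩ := hx'
  have hc : IsWindow (m + 1) (g.insertIdx p s) :=
    (isWindow_insertIdx_iff (hg.length_eq ▸ hp) hs).mpr hg
  have hlen : (g.insertIdx p s).length = m + 1 := hc.length_eq
  have hsp : (g.insertIdx p s)[p]'(by omega) = s := by simp
  have hsp' : (g.insertIdx p s)[p']'(by omega) = s' := by simp [heq]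
  obtain rfl : p = p' := (hc.nodup.getElem_inj_iff (i := p) (j := p') (hi := by simp; omega)
    (hj := by simp; omega)).mp (by simp only [List.getElem_map, hsp, hsp', hs, hs'])
  obtain rfl : s = s' := hsp.symm.trans hsp'
  obtain rfl : g = g' := List.insertIdx_injective p s heq
  rfl

theorem card_filter_windowFinset_succ (m : ℕ) (Q : List ℤ → Prop) [DecidablePred Q] :
    #{c ∈ windowFinset (m + 1) | Q c}
      = ∑ g ∈ windowFinset m, #{x ∈ insertionSlots m | Q (g.insertIdx x.1 x.2)} := by
  rw [windowFinset, filter_image,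
    card_image_of_injOn ((insertIdx_injOn_windowFinset m).mono (filter_subset _ _)),
    card_filter, sum_product]
  simp only [card_filter]

def pad (g : List ℤ) : List ℤ := 0 :: g ++ [0]

noncomputable def windowBasc (g : List ℤ) : ℕ := bigAscents (pad g)

theorem pad_insertIdx {g : List ℤ} {p : ℕ} (hp : p ≤ g.length) (s : ℤ) :
    pad (g.insertIdx p s) = (pad g).insertIdx (p + 1) s := by
  rw [pad, pad, List.insertIdx_append_of_le_length s (p + 1) (0 :: g) [0] (by simpa),
    List.insertIdx_succ_cons]

theorem windowBasc_insertIdx {g : List ℤ} {p : ℕ} (hp : p ≤ g.length) (s : ℤ) :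
    windowBasc (g.insertIdx p s)
        + (if Lll ((pad g).getD p 0) ((pad g).getD (p + 1) 0) then 1 else 0)
      = windowBasc g + (if Lll ((pad g).getD p 0) s then 1 else 0)
        + (if Lll s ((pad g).getD (p + 1) 0) then 1 else 0) := by
  rw [windowBasc, windowBasc, pad_insertIdx hp]
  exact bigAscents_insertIdx s p (pad g) (by simp [pad]; omega)

theorem sum_range_getD_pad_eq_count {g : List ℤ} {m : ℕ} (hg : g.length = m) {x : ℤ}
    (hx : x ≠ 0) :
    ∑ p ∈ range (m + 1), (if (pad g).getD p 0 = x then 1 else 0) = g.count x := by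
  subst hg
  have h : ∀ p ∈ range (g.length + 1), (pad g).getD p 0 = (0 :: g).getD p 0 := fun p hp =>
    List.getD_append _ _ _ _ (by simpa using hp)
  rw [sum_congr rfl fun p hp => by rw [h p hp], ← List.length_cons,
    List.sum_range_length_getD_eq_count, List.count_cons, beq_false_of_ne hx.symm]
  rfl

theorem sum_range_getD_succ_pad_eq_count {g : List ℤ} {m : ℕ} (hg : g.length = m) {x : ℤ}
    (hx : x ≠ 0) :
    ∑ p ∈ range (m + 1), (if (pad g).getD (p + 1) 0 = x then 1 else 0) = g.count x := by
  subst hg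
  have h : (g ++ [0]).length = g.length + 1 := by simp
  simp only [pad, List.cons_append, List.getD_cons_succ]
  rw [← h, List.sum_range_length_getD_eq_count, List.count_append]
  simp [hx.symm]

namespace IsWindow

variable {m : ℕ} {g : List ℤ}

theorem natAbs_getD_pad_le (h : IsWindow m g) (q : ℕ) : ((pad g).getD q 0).natAbs ≤ m := by
  rw [List.getD_eq_getElem?_getD]
  cases hq : (pad g)[q]? with
  | none => simp
  | some x =>
    have hx := List.mem_of_getElem? hq
    simp only [pad, List.cons_append, List.mem_cons, List.mem_append, List.not_mem_nil,
      or_false] at hx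
    rcases hx with rfl | hx | rfl
    · simp
    · exact (h.natAbs_mem_Icc hx).2
    · simp

theorem windowBasc_insertIdx_max (h : IsWindow m g) {p : ℕ} (hp : p ≤ m) :
    windowBasc (g.insertIdx p ((m : ℤ) + 1))
      = if Lll ((pad g).getD p 0) ((pad g).getD (p + 1) 0) ∨ (pad g).getD p 0 = m then
          windowBasc g
        else windowBasc g + 1 := by
  have key := windowBasc_insertIdx (h.length_eq ▸ hp) ((m : ℤ) + 1)
  have ha := h.natAbs_getD_pad_le p
  have hb := h.natAbs_getD_pad_le (p + 1)
  simp only [lll_iff] at key ⊢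
  split_ifs at key ⊢ <;> omega

theorem windowBasc_insertIdx_neg_max (h : IsWindow m g) {p : ℕ} (hp : p ≤ m) :
    windowBasc (g.insertIdx p (-((m : ℤ) + 1)))
      = if Lll ((pad g).getD p 0) ((pad g).getD (p + 1) 0) ∨ (pad g).getD (p + 1) 0 = -m then
          windowBasc g
        else windowBasc g + 1 := by
  have key := windowBasc_insertIdx (h.length_eq ▸ hp) (-((m : ℤ) + 1))
  have ha := h.natAbs_getD_pad_le p
  have hb := h.natAbs_getD_pad_le (p + 1)
  simp only [lll_iff] at key ⊢
  split_ifs at key ⊢ <;> omega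

theorem windowBasc_insertIdx_eq_or_eq_succ (h : IsWindow m g) {x : ℕ × ℤ}
    (hx : x ∈ insertionSlots m) :
    windowBasc (g.insertIdx x.1 x.2) = windowBasc g
      ∨ windowBasc (g.insertIdx x.1 x.2) = windowBasc g + 1 := by
  obtain ⟨p, s⟩ := x
  simp only [insertionSlots, mem_product, mem_range, mem_insert, mem_singleton] at hx
  obtain ⟨hp, rfl | rfl⟩ := hx
  · rw [h.windowBasc_insertIdx_max (by omega)]
    split_ifs <;> simp
  · rw [h.windowBasc_insertIdx_neg_max (by omega)]
    split_ifs <;> simp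

theorem card_filter_windowBasc_insertIdx_eq_self (h : IsWindow m g) (hm : 1 ≤ m) :
    #{x ∈ insertionSlots m | windowBasc (g.insertIdx x.1 x.2) = windowBasc g}
      = 2 * windowBasc g + 1 := by
  have hslot : ∀ p ∈ range (m + 1),
      ∑ s ∈ {(m : ℤ) + 1, -((m : ℤ) + 1)},
          (if windowBasc (g.insertIdx p s) = windowBasc g then 1 else 0)
        = 2 * (if Lll ((pad g).getD p 0) ((pad g).getD (p + 1) 0) then 1 else 0)
          + ((if (pad g).getD p 0 = m then 1 else 0)
            + (if (pad g).getD (p + 1) 0 = -m then 1 else 0)) := by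
    intro p hp
    have hp : p ≤ m := Nat.lt_succ_iff.mp (mem_range.mp hp)
    rw [sum_pair (by omega), h.windowBasc_insertIdx_max hp, h.windowBasc_insertIdx_neg_max hp]
    have ha := h.natAbs_getD_pad_le p
    have hb := h.natAbs_getD_pad_le (p + 1)
    simp only [lll_iff]
    split_ifs <;> omega
  have hasc : ∑ p ∈ range (m + 1),
      (if Lll ((pad g).getD p 0) ((pad g).getD (p + 1) 0) then 1 else 0) = windowBasc g := by
    rw [windowBasc, bigAscents_eq_sum]
    simp [pad, h.length_eq]
  have hm0 : (m : ℤ) ≠ 0 := by omega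
  rw [card_filter, insertionSlots, sum_product, sum_congr rfl hslot, sum_add_distrib,
    sum_add_distrib, ← mul_sum, hasc, sum_range_getD_pad_eq_count h.length_eq hm0,
    sum_range_getD_succ_pad_eq_count h.length_eq (neg_ne_zero.mpr hm0), h.count_add_count_neg hm]

theorem card_filter_windowBasc_insertIdx (h : IsWindow m g) (hm : 1 ≤ m) (k : ℤ) :
    (#{x ∈ insertionSlots m | (windowBasc (g.insertIdx x.1 x.2) : ℤ) = k} : ℤ)
      = (if (windowBasc g : ℤ) = k then 2 * k + 1 else 0)
        + (if (windowBasc g : ℤ) = k - 1 then 2 * ((m : ℤ) + 1) - 2 * k + 1 else 0) := by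
  have hstay := h.card_filter_windowBasc_insertIdx_eq_self hm
  have hstep : ∀ x ∈ insertionSlots m,
      (windowBasc (g.insertIdx x.1 x.2) : ℤ) = windowBasc g
        ∨ (windowBasc (g.insertIdx x.1 x.2) : ℤ) = windowBasc g + 1 := fun x hx => by
    exact_mod_cast h.windowBasc_insertIdx_eq_or_eq_succ hx
  by_cases hj : (windowBasc g : ℤ) = k
  · rw [if_pos hj, if_neg (by omega), ← hj, filter_congr fun x _ => Nat.cast_inj, hstay]
    push_cast
    ring
  by_cases hj' : (windowBasc g : ℤ) = k - 1
  · have hup : {x ∈ insertionSlots m | (windowBasc (g.insertIdx x.1 x.2) : ℤ) = k}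
        = {x ∈ insertionSlots m | ¬windowBasc (g.insertIdx x.1 x.2) = windowBasc g} :=
      filter_congr fun x hx => by have := hstep x hx; omega
    have hsplit := card_filter_add_card_filter_not (s := insertionSlots m)
      (fun x => windowBasc (g.insertIdx x.1 x.2) = windowBasc g)
    rw [hstay, card_insertionSlots] at hsplit
    rw [if_neg hj, if_pos hj', hup]
    omega
  · rw [if_neg hj, if_neg hj', filter_false_of_mem fun x hx => by have := hstep x hx; omega]
    rfl

end IsWindow

noncomputable def windowCount (m : ℕ) (k : ℤ) : ℕ :=
  #{g ∈ windowFinset m | 1 ∈ g ∧ (windowBasc g : ℤ) = k}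

theorem card_filter_one_mem_insertIdx {m : ℕ} (hm : 1 ≤ m) {g : List ℤ}
    (hg : g ∈ windowFinset m) (k : ℤ) :
    (#{x ∈ insertionSlots m |
        1 ∈ g.insertIdx x.1 x.2 ∧ (windowBasc (g.insertIdx x.1 x.2) : ℤ) = k} : ℤ)
      = if 1 ∈ g then
          (if (windowBasc g : ℤ) = k then 2 * k + 1 else 0)
            + (if (windowBasc g : ℤ) = k - 1 then 2 * ((m : ℤ) + 1) - 2 * k + 1 else 0)
        else 0 := by
  have hg := mem_windowFinset.mp hg
  have hone : ∀ x ∈ insertionSlots m, 1 ∈ g.insertIdx x.1 x.2 ↔ 1 ∈ g := fun x hx => by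
    rw [mem_insertionSlots] at hx
    have hs : (1 : ℤ) ≠ x.2 := by omega
    simp [List.mem_insertIdx (hg.length_eq ▸ hx.1), hs]
  by_cases h1 : 1 ∈ g
  · rw [if_pos h1, ← hg.card_filter_windowBasc_insertIdx hm k,
      filter_congr fun x hx => by rw [hone x hx]]
    simp [h1]
  · rw [if_neg h1, filter_false_of_mem fun x hx => by rw [hone x hx]; tauto]
    rfl

theorem windowCount_succ {m : ℕ} (hm : 1 ≤ m) (k : ℤ) :
    (windowCount (m + 1) k : ℤ)
      = (2 * ((m : ℤ) + 1) - 2 * k + 1) * windowCount m (k - 1)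
        + (2 * k + 1) * windowCount m k := by
  rw [windowCount, card_filter_windowFinset_succ, Nat.cast_sum,
    sum_congr rfl fun g hg => card_filter_one_mem_insertIdx hm hg k, ← sum_filter,
    sum_add_distrib, ← sum_filter, ← sum_filter, sum_const, sum_const, filter_filter,
    filter_filter, windowCount, windowCount, nsmul_eq_mul, nsmul_eq_mul]
  ring

theorem windowCount_one (k : ℤ) : windowCount 1 k = if k = 0 then 1 else 0 := by
  have h : windowBasc [1] = 0 := by simp [windowBasc, pad, bigAscents, lll_iff]
  rw [windowCount, windowFinset_one, filter_insert, filter_singleton]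
  by_cases hk : k = 0 <;> simp [h, hk, eq_comm]

def window (n : ℕ) (w : Equiv.Perm ℤ) : List ℤ := (List.range n).map fun i : ℕ => w ((i : ℤ) + 1)

theorem window_getD {n p : ℕ} (w : Equiv.Perm ℤ) (hp : p < n) :
    (window n w).getD p 0 = w ((p : ℤ) + 1) := by
  simp [window, hp]

namespace IsSignedPerm

variable {n : ℕ} {w : Equiv.Perm ℤ}

theorem map_zero (h : IsSignedPerm n w) : w 0 = 0 := by
  have := h.1 0
  rw [neg_zero] at this
  omega

theorem map_ne_zero (h : IsSignedPerm n w) {i : ℤ} (hi : i ≠ 0) : w i ≠ 0 :=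
  fun hw => hi (w.injective (hw.trans h.map_zero.symm))

theorem natAbs_map_le (h : IsSignedPerm n w) {i : ℤ} (hi : i.natAbs ≤ n) : (w i).natAbs ≤ n := by
  by_contra hlt
  have hfix : w (w i) = w i := h.2 _ (by rw [Int.abs_eq_natAbs]; omega)
  have := w.injective hfix
  omega

theorem isWindow_window (h : IsSignedPerm n w) : IsWindow n (window n w) := by
  have hnodup : ((window n w).map Int.natAbs).Nodup := by
    refine List.Nodup.map_on (fun x hx y hy hxy => ?_) (List.nodup_range.map fun a b hab => ?_)
    · obtain ⟨a, -, rfl⟩ := List.mem_map.mp hx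
      obtain ⟨b, -, rfl⟩ := List.mem_map.mp hy
      rcases Int.natAbs_eq_natAbs_iff.mp hxy with hab | hab
      · exact congrArg w (w.injective hab)
      · rw [← h.1] at hab
        have := w.injective hab
        omega
    · simpa using hab
  refine (hnodup.subperm fun x hx => ?_).perm_of_length_le (by simp [window])
  obtain ⟨_, hy, rfl⟩ := List.mem_map.mp hx
  obtain ⟨i, hi, rfl⟩ := List.mem_map.mp hy
  have h1 := h.natAbs_map_le (i := (i : ℤ) + 1) (by simp at hi; omega)
  have h2 := h.map_ne_zero (i := (i : ℤ) + 1) (by omega)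
  rw [List.mem_range'_1]
  omega

theorem one_mem_window_iff (hn : 1 ≤ n) (h : IsSignedPerm n w) :
    1 ∈ window n w ↔ 0 < w.symm 1 := by
  constructor
  · intro hmem
    obtain ⟨i, -, hi⟩ := List.mem_map.mp hmem
    rw [← hi, Equiv.symm_apply_apply]
    omega
  · intro hpos
    have hle : w.symm 1 ≤ n := by
      by_contra hgt
      have := h.2 (w.symm 1) (by rw [abs_of_pos hpos]; omega)
      rw [Equiv.apply_symm_apply] at this
      omega
    refine List.mem_map.mpr ⟨(w.symm 1 - 1).toNat, List.mem_range.mpr (by omega), ?_⟩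
    rw [show (((w.symm 1 - 1).toNat : ℕ) : ℤ) + 1 = w.symm 1 by omega, Equiv.apply_symm_apply]

theorem eq_of_window_eq {w' : Equiv.Perm ℤ} (hw : IsSignedPerm n w) (hw' : IsSignedPerm n w')
    (h : window n w = window n w') : w = w' := by
  have hpos : ∀ i : ℤ, 1 ≤ i → i ≤ n → w i = w' i := fun i hi1 hin => by
    have := congrArg (·.getD (i - 1).toNat 0) h
    simp only [window_getD _ (show (i - 1).toNat < n by omega)] at this
    rwa [show (((i - 1).toNat : ℕ) : ℤ) + 1 = i by omega] at this
  ext i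
  rcases lt_trichotomy i 0 with hi | rfl | hi
  · by_cases hin : -n ≤ i
    · rw [← neg_neg i, hw.1, hw'.1, hpos (-i) (by omega) (by omega)]
    · rw [hw.2 i (by rw [abs_of_neg hi]; omega), hw'.2 i (by rw [abs_of_neg hi]; omega)]
  · rw [hw.map_zero, hw'.map_zero]
  · by_cases hin : i ≤ n
    · exact hpos i hi hin
    · rw [hw.2 i (by rw [abs_of_pos hi]; omega), hw'.2 i (by rw [abs_of_pos hi]; omega)]

end IsSignedPerm

theorem getD_pad_window (n : ℕ) (w : Equiv.Perm ℤ) (q : ℕ) :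
    (pad (window n w)).getD q 0 = if 1 ≤ q ∧ q ≤ n then w q else 0 := by
  have hlen : (window n w).length = n := by simp [window]
  rcases q with _ | r
  · simp [pad]
  simp only [pad, List.cons_append, List.getD_cons_succ]
  rcases lt_trichotomy r n with hr | rfl | hr
  · rw [List.getD_append _ _ _ _ (by omega), window_getD _ hr, if_pos (by omega)]
    push_cast
    rfl
  · rw [List.getD_append_right _ _ _ _ hlen.le, hlen, Nat.sub_self, if_neg (by omega)]
    rfl
  · rw [List.getD_eq_default _ _ (by simp; omega), if_neg (by omega)]

theorem lll_getD_pad_window_iff {n q : ℕ} (hn : 1 ≤ n) (hq : q ≤ n) (w : Equiv.Perm ℤ) :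
    Lll ((pad (window n w)).getD q 0) ((pad (window n w)).getD (q + 1) 0)
      ↔ if q = 0 then 2 ≤ w 1 else if q = n then w n ≤ -2 else Lll (w q) (w (q + 1)) := by
  rw [getD_pad_window, getD_pad_window]
  rcases Nat.eq_zero_or_pos q with rfl | hq0
  · simp [lll_iff, if_pos hn]
  rw [if_neg hq0.ne', if_pos ⟨hq0, hq⟩]
  by_cases hqn : q = n
  · subst hqn
    simp [lll_iff]
    omega
  · rw [if_pos (show 1 ≤ q + 1 ∧ q + 1 ≤ n by omega), if_neg hqn]
    push_cast
    rfl

theorem basc_eq_windowBasc {n : ℕ} (hn : 1 ≤ n) (w : Equiv.Perm ℤ) :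
    basc n w = windowBasc (window n w) := by
  have hlen : (pad (window n w)).length - 1 = n + 1 := by simp [pad, window]
  rw [windowBasc, bigAscents_eq_sum, hlen, ← card_filter, basc]
  refine card_nbij' (fun i => if i = -1 then 0 else i.toNat) (fun q => if q = 0 then -1 else q)
    ?_ ?_ ?_ ?_
  · intro i hi
    simp only [coe_filter, mem_insert, mem_Icc, Set.mem_ofPred_eq] at hi
    simp only [coe_filter, mem_range, Set.mem_ofPred_eq]
    obtain ⟨rfl | hi, hP⟩ := hi
    · rw [if_pos rfl, lll_getD_pad_window_iff hn (Nat.zero_le n)]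
      simpa using hP
    · rw [if_neg (by omega), lll_getD_pad_window_iff hn (by omega), if_neg (by omega)]
      refine ⟨by omega, ?_⟩
      simpa [show ((i.toNat : ℕ) : ℤ) = i by omega, show i ≠ -1 by omega,
        show i.toNat = n ↔ i = n by omega] using hP
  · intro q hq
    simp only [coe_filter, mem_range, Set.mem_ofPred_eq] at hq
    simp only [coe_filter, mem_insert, mem_Icc, Set.mem_ofPred_eq]
    rw [lll_getD_pad_window_iff hn (by omega)] at hq
    rcases Nat.eq_zero_or_pos q with rfl | hq0
    · simpa using hq.2
    · simp only [if_neg hq0.ne'] at hq ⊢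
      refine ⟨by omega, ?_⟩
      simpa [show (q : ℤ) ≠ -1 by omega] using hq.2
  · intro i hi
    simp only [coe_filter, mem_insert, mem_Icc, Set.mem_ofPred_eq] at hi
    simp only
    split_ifs <;> omega
  · intro q _
    simp only
    split_ifs <;> simp_all

def ofWindow (n : ℕ) (l : List ℤ) (i : ℤ) : ℤ :=
  if i ≠ 0 ∧ i.natAbs ≤ n then i.sign * l.getD (i.natAbs - 1) 0 else i

theorem ofWindow_neg {n : ℕ} {l : List ℤ} (i : ℤ) : ofWindow n l (-i) = -ofWindow n l i := by
  simp only [ofWindow, neg_ne_zero, Int.natAbs_neg, Int.sign_neg]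
  split_ifs <;> ring

namespace IsWindow

variable {n : ℕ} {l : List ℤ}

theorem natAbs_ofWindow (h : IsWindow n l) {i : ℤ} (hi : i ≠ 0 ∧ i.natAbs ≤ n) :
    (ofWindow n l i).natAbs = (l.getD (i.natAbs - 1) 0).natAbs ∧
      1 ≤ (ofWindow n l i).natAbs ∧ (ofWindow n l i).natAbs ≤ n := by
  have hmem : l.getD (i.natAbs - 1) 0 ∈ l := by
    rw [List.getD_eq_getElem _ _ (by rw [h.length_eq]; omega)]
    exact List.getElem_mem _
  rw [ofWindow, if_pos hi, Int.natAbs_mul, Int.natAbs_sign_of_ne_zero hi.1, one_mul]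
  exact ⟨rfl, h.natAbs_mem_Icc hmem⟩

theorem ofWindow_injective (h : IsWindow n l) : Function.Injective (ofWindow n l) := by
  intro a b hab
  have hout : ∀ i, ¬(i ≠ 0 ∧ i.natAbs ≤ n) → ofWindow n l i = i := fun i hi => if_neg hi
  by_cases ha : a ≠ 0 ∧ a.natAbs ≤ n <;> by_cases hb : b ≠ 0 ∧ b.natAbs ≤ n
  · have hA := h.natAbs_ofWindow ha
    have hB := h.natAbs_ofWindow hb
    have habs : a.natAbs = b.natAbs := by
      have := h.eq_of_natAbs_getD_eq (p := a.natAbs - 1) (q := b.natAbs - 1) (by omega)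
        (by omega) (by rw [← hA.1, ← hB.1, hab])
      omega
    rcases Int.natAbs_eq_natAbs_iff.mp habs with rfl | rfl
    · rfl
    · rw [ofWindow_neg] at hab
      omega
  · have hA := h.natAbs_ofWindow ha
    rw [hout b hb] at hab
    omega
  · have hB := h.natAbs_ofWindow hb
    rw [hout a ha] at hab
    omega
  · rwa [hout a ha, hout b hb] at hab

theorem ofWindow_bijective (h : IsWindow n l) : Function.Bijective (ofWindow n l) := by
  refine ⟨h.ofWindow_injective, fun j => ?_⟩
  by_cases hj : j ≠ 0 ∧ j.natAbs ≤ n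
  · set S := {i ∈ Icc (-(n : ℤ)) n | i ≠ 0}
    have hS : ∀ i, i ∈ S ↔ i ≠ 0 ∧ i.natAbs ≤ n := fun i => by
      simp only [S, mem_filter, mem_Icc]
      omega
    have hsub : S.image (ofWindow n l) ⊆ S := fun x hx => by
      obtain ⟨i, hi, rfl⟩ := mem_image.mp hx
      have := h.natAbs_ofWindow ((hS i).mp hi)
      exact (hS _).mpr ⟨by omega, this.2.2⟩
    have himage : S.image (ofWindow n l) = S :=
      eq_of_subset_of_card_le hsub (card_image_of_injective _ h.ofWindow_injective).ge
    obtain ⟨i, -, hi⟩ := mem_image.mp (himage ▸ (hS j).mpr hj)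
    exact ⟨i, hi⟩
  · exact ⟨j, if_neg hj⟩

theorem exists_window_eq (h : IsWindow n l) :
    ∃ w : Equiv.Perm ℤ, IsSignedPerm n w ∧ window n w = l := by
  refine ⟨Equiv.ofBijective _ h.ofWindow_bijective, ⟨ofWindow_neg, fun i hi => ?_⟩, ?_⟩
  · rw [Int.abs_eq_natAbs] at hi
    simp only [Equiv.ofBijective_apply, ofWindow, if_neg (by omega : ¬(i ≠ 0 ∧ i.natAbs ≤ n))]
  · refine List.ext_getElem (by simp [window, h.length_eq]) fun p _ hp => ?_
    simp only [window, List.getElem_map, List.getElem_range, Equiv.ofBijective_apply]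
    rw [ofWindow, if_pos (by rw [h.length_eq] at hp; omega), List.getD_eq_getElem _ _ (by omega)]
    simp only [Int.sign_eq_one_of_pos (by omega : (0 : ℤ) < p + 1), one_mul]
    congr 1

end IsWindow

theorem psiZ_eq_windowCount {n : ℕ} (hn : 1 ≤ n) (k : ℤ) : psiZ n k = windowCount n k := by
  have hinj : Set.InjOn (window n) {w | InXn n w ∧ (basc n w : ℤ) = k} :=
    fun w hw w' hw' => hw.1.1.eq_of_window_eq hw'.1.1
  have himage : window n '' {w | InXn n w ∧ (basc n w : ℤ) = k}
      = ↑{g ∈ windowFinset n | 1 ∈ g ∧ (windowBasc g : ℤ) = k} := by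
    ext g
    simp only [Set.mem_image, Set.mem_ofPred_eq, coe_filter, mem_windowFinset, InXn]
    constructor
    · rintro ⟨w, ⟨⟨hw, h1⟩, hk⟩, rfl⟩
      exact ⟨hw.isWindow_window, (hw.one_mem_window_iff hn).mpr h1,
        basc_eq_windowBasc hn w ▸ hk⟩
    · rintro ⟨hg, h1, hk⟩
      obtain ⟨w, hw, rfl⟩ := hg.exists_window_eq
      exact ⟨w, ⟨⟨hw, (hw.one_mem_window_iff hn).mp h1⟩, by rwa [basc_eq_windowBasc hn]⟩, rfl⟩
  rw [psiZ, ← hinj.ncard_image, himage, Set.ncard_coe_finset]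
  rfl

/-- Proposition: recurrence for `ψ_{n,k}`.
With the convention `ψ_{m,j} = 0` for `j < 0`, for all `n ≥ 2` and all `k`,
`ψ_{n,k} = (2n - 2k + 1) ψ_{n-1,k-1} + (2k + 1) ψ_{n-1,k}`, with initial conditions
`ψ_{1,0} = 1` and `ψ_{1,k} = 0` for `k ≠ 0`. -/
theorem psi_recurrence :
    (∀ n : ℕ, 2 ≤ n → ∀ k : ℤ,
      (psiZ n k : ℤ) = (2 * (n : ℤ) - 2 * k + 1) * (psiZ (n - 1) (k - 1) : ℤ)
        + (2 * k + 1) * (psiZ (n - 1) k : ℤ)) ∧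
    psiZ 1 0 = 1 ∧ ∀ k : ℤ, k ≠ 0 → psiZ 1 k = 0 := by
  refine ⟨fun n hn k => ?_, ?_, fun k hk => ?_⟩
  · obtain ⟨m, rfl⟩ : ∃ m, n = m + 1 := ⟨n - 1, by omega⟩
    rw [Nat.add_sub_cancel, psiZ_eq_windowCount (by omega), psiZ_eq_windowCount (by omega),
      psiZ_eq_windowCount (by omega), windowCount_succ (by omega)]
    push_cast
    ring
  · rw [psiZ_eq_windowCount le_rfl, windowCount_one, if_pos rfl]
  · rw [psiZ_eq_windowCount le_rfl, windowCount_one, if_neg hk]
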